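/- arXiv:1311.7668 — 5 statements merged into one kernel-verified Lean document; each statement's English description precedes it below -/
import Mathlib

section
/- If f is analytic on the unit disk with 0 < |f(z)| ≤ 1 for all z in the disk, then |f'(0)| ≤ 2/e. -/
open Metric Set Complex

/-- A function with a power series on the unit ball has a primitive there. -/
lemma exists_primitive_aux {q : ℂ → ℂ} {p : FormalMultilinearSeries ℂ ℂ ℂ}
    (hq : HasFPowerSeriesOnBall q p 0 1) :
    ∃ g : ℂ → ℂ, g 0 = 0 ∧ ∀ z ∈ Metric.ball (0:ℂ) 1, HasDerivAt g (q z) z := by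
  refine ⟨fun z => ∑' n : ℕ, (p.coeff n / (n+1)) * z^(n+1), ?_, ?_⟩
  · have : ∀ n : ℕ, (p.coeff n / (n+1)) * (0:ℂ)^(n+1) = 0 := by
      intro n; simp
    simp [this]
  intro z hz
  rw [Metric.mem_ball, dist_zero_right] at hz
  obtain ⟨r, hzr, hr1⟩ := exists_between hz
  have hr0 : 0 < r := lt_of_le_of_lt (norm_nonneg z) hzr
  have hrrad : ((r.toNNReal : NNReal) : ENNReal) < p.radius := by
    refine lt_of_lt_of_le ?_ hq.r_le
    rw [← ENNReal.ofReal_one]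
    exact ENNReal.ofReal_lt_ofReal_iff_of_nonneg hr0.le |>.2 hr1
  have hsum : Summable (fun n : ℕ => ‖p n‖ * r ^ n) := by
    simpa [Real.coe_toNNReal r hr0.le] using p.summable_norm_mul_pow hrrad
  have key := hasDerivAt_tsum_of_isPreconnected (u := fun n : ℕ => ‖p n‖ * r ^ n)
    (g := fun (n : ℕ) (w : ℂ) => (p.coeff n / (n+1)) * w^(n+1))
    (g' := fun (n : ℕ) (w : ℂ) => p.coeff n * w^n) (y := z)
    hsum (Metric.isOpen_ball (x := (0:ℂ)) (ε := r)) (convex_ball (0:ℂ) r).isPreconnected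
    (fun n w _ => ?_) (fun n w hw => ?_) (Metric.mem_ball_self hr0) ?_ ?_
  · have hqsum : HasSum (fun n : ℕ => p.coeff n * z^n) (q z) := by
      have hzm : z ∈ Metric.eball (0:ℂ) 1 := by
        rw [Metric.mem_eball, edist_zero_right, enorm_eq_nnnorm]
        exact_mod_cast hz
      have := hq.hasSum (y := z) hzm
      simp only [FormalMultilinearSeries.apply_eq_pow_smul_coeff, smul_eq_mul, zero_add] at this
      exact this.congr_fun fun n => mul_comm _ _
    rwa [hqsum.tsum_eq] at key
  · have h1 : HasDerivAt (fun w : ℂ => w^(n+1)) ((n+1 : ℕ) * w^n) w := by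
      simpa using hasDerivAt_pow (n+1) w
    have := h1.const_mul (p.coeff n / (n+1))
    convert this using 1
    case e'_4 => rfl
    have hne : ((n:ℂ)+1) ≠ 0 := Nat.cast_add_one_ne_zero n
    push_cast
    field_simp
  · rw [Metric.mem_ball, dist_zero_right] at hw
    show ‖p.coeff n * w ^ n‖ ≤ ‖p n‖ * r ^ n
    rw [FormalMultilinearSeries.norm_apply_eq_norm_coef, norm_mul, norm_pow]
    exact mul_le_mul_of_nonneg_left (pow_le_pow_left₀ (norm_nonneg w) hw.le n) (norm_nonneg _)
  · have : ∀ n : ℕ, (p.coeff n / (n+1)) * (0:ℂ)^(n+1) = 0 := by intro n; simp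
    simpa [this] using summable_zero
  · rw [Metric.mem_ball, dist_zero_right]; exact hzr

lemma exists_log_aux {F : ℂ → ℂ} {R : ℝ} (hR : 1 < R)
    (hd : DifferentiableOn ℂ F (ball 0 R)) (hne : ∀ z ∈ ball (0:ℂ) R, F z ≠ 0) :
    ∃ G : ℂ → ℂ, G 0 = Complex.log (F 0) ∧
      (∀ z ∈ ball (0:ℂ) 1, HasDerivAt G (deriv F z / F z) z) ∧
      (∀ z ∈ ball (0:ℂ) 1, Complex.exp (G z) = F z) := by
  have hsub : ball (0:ℂ) 1 ⊆ ball 0 R := ball_subset_ball hR.le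
  have hdat : ∀ z ∈ ball (0:ℂ) R, DifferentiableAt ℂ F z := fun z hz =>
    hd.differentiableAt (isOpen_ball.mem_nhds hz)
  -- q = logarithmic derivative
  set q : ℂ → ℂ := fun z => deriv F z / F z with hq_def
  have hqd : DifferentiableOn ℂ q (ball 0 R) := by
    have hFa : AnalyticOnNhd ℂ F (ball 0 R) := hd.analyticOnNhd isOpen_ball
    exact (hFa.deriv.differentiableOn).div hd hne
  have hq1 : DifferentiableOn ℂ q (closedBall 0 ((1:NNReal) : ℝ)) := by
    refine hqd.mono ?_
    simpa using closedBall_subset_ball (by exact_mod_cast hR)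
  have hps : HasFPowerSeriesOnBall q (cauchyPowerSeries q 0 1) 0 1 := by
    simpa using hq1.hasFPowerSeriesOnBall one_pos
  obtain ⟨g, hg0, hgd⟩ := exists_primitive_aux hps
  refine ⟨fun z => Complex.log (F 0) + g z, by simp [hg0], ?_, ?_⟩
  · intro z hz
    simpa using (hgd z hz).const_add (Complex.log (F 0))
  · -- show exp (log F 0 + g z) = F z via constancy of F z * exp(-(...))
    have h0R : (0:ℂ) ∈ ball (0:ℂ) R := by simp [Metric.mem_ball]; linarith
    have hF0 : F 0 ≠ 0 := hne 0 h0R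
    set h : ℂ → ℂ := fun z => F z * Complex.exp (-(Complex.log (F 0) + g z)) with hh_def
    have hder : ∀ z ∈ ball (0:ℂ) 1, HasDerivAt h 0 z := by
      intro z hz
      have hFz : HasDerivAt F (deriv F z) z := (hdat z (hsub hz)).hasDerivAt
      have hGz : HasDerivAt (fun w => -(Complex.log (F 0) + g w)) (-(q z)) z := by
        exact ((hgd z hz).const_add (Complex.log (F 0))).neg
      have hEz : HasDerivAt (fun w => Complex.exp (-(Complex.log (F 0) + g w)))
          (Complex.exp (-(Complex.log (F 0) + g z)) * (-(q z))) z := hGz.cexp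
      have := hFz.mul hEz
      convert this using 1
      case e'_4 => rfl
      case e'_5 => rfl
      case e'_8 => rfl
      have hFzne : F z ≠ 0 := hne z (hsub hz)
      simp only [hq_def]
      field_simp
      ring
    have hconst : ∀ z ∈ ball (0:ℂ) 1, h z = h 0 := by
      intro z hz
      refine (convex_ball (0:ℂ) 1).is_const_of_fderivWithin_eq_zero
        (fun w hw => ((hder w hw).differentiableAt).differentiableWithinAt) ?_ hz
        (mem_ball_self one_pos)
      intro w hw
      have hzero : HasFDerivAt h (0 : ℂ →L[ℂ] ℂ) w := by
        have := (hder w hw).hasFDerivAt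
        simpa using this
      exact hzero.hasFDerivWithinAt.fderivWithin (isOpen_ball.uniqueDiffWithinAt hw)
    intro z hz
    have h0 : h 0 = 1 := by
      simp only [hh_def, hg0, add_zero, Complex.exp_neg, Complex.exp_log hF0]
      field_simp
    have h1 : F z * Complex.exp (-(Complex.log (F 0) + g z)) = 1 := by
      have := hconst z hz
      rw [h0] at this
      simpa [hh_def] using this
    have h2 : (F z * Complex.exp (-(Complex.log (F 0) + g z))) *
        Complex.exp (Complex.log (F 0) + g z) = Complex.exp (Complex.log (F 0) + g z) := by
      rw [h1, one_mul]
    rw [mul_assoc, ← Complex.exp_add, neg_add_cancel, Complex.exp_zero, mul_one] at h2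
    exact h2.symm

lemma key_aux {F : ℂ → ℂ} {R : ℝ} (hR : 1 < R)
    (hd : DifferentiableOn ℂ F (ball 0 R))
    (hne : ∀ z ∈ ball (0:ℂ) R, F z ≠ 0) (hle : ∀ z ∈ ball (0:ℂ) R, ‖F z‖ ≤ 1) :
    ‖deriv F 0‖ ≤ 2 / Real.exp 1 := by
  have h0R : (0:ℂ) ∈ ball (0:ℂ) R := by simp [Metric.mem_ball]; linarith
  by_cases hmax : ∃ z₀ ∈ ball (0:ℂ) R, ‖F z₀‖ = 1
  · -- maximum modulus: F is constant, so deriv = 0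
    obtain ⟨z₀, hz₀, hz₀1⟩ := hmax
    have hisMax : IsMaxOn (norm ∘ F) (ball (0:ℂ) R) z₀ := by
      intro z hz
      simp only [Function.comp_apply, mem_setOf_eq, hz₀1]
      exact hle z hz
    have heq := Complex.eqOn_of_isPreconnected_of_isMaxOn_norm
      (convex_ball (0:ℂ) R).isPreconnected isOpen_ball hd hz₀ hisMax
    have hev : F =ᶠ[nhds (0:ℂ)] (fun _ => F z₀) := by
      filter_upwards [isOpen_ball.mem_nhds h0R] with w hw using heq hw
    rw [hev.deriv_eq, deriv_const]
    simp only [norm_zero]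
    positivity
  · push_neg at hmax
    have hlt : ∀ z ∈ ball (0:ℂ) R, ‖F z‖ < 1 := fun z hz =>
      lt_of_le_of_ne (hle z hz) (hmax z hz)
    have hsub : ball (0:ℂ) 1 ⊆ ball 0 R := ball_subset_ball hR.le
    obtain ⟨G, hG0, hGd, hGexp⟩ := exists_log_aux hR hd hne
    have h01 : (0:ℂ) ∈ ball (0:ℂ) 1 := mem_ball_self one_pos
    -- Re (G z) < 0 on the unit ball
    have hre : ∀ z ∈ ball (0:ℂ) 1, (G z).re < 0 := by
      intro z hz
      by_contra hcon
      push_neg at hcon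
      have : (1:ℝ) ≤ ‖F z‖ := by
        rw [← hGexp z hz, Complex.norm_exp]
        exact Real.one_le_exp hcon
      exact absurd (hlt z (hsub hz)) (not_lt.2 this)
    set a : ℂ := G 0 with ha_def
    have hare : a.re < 0 := hre 0 h01
    set D : ℂ → ℂ := fun z => G z + (starRingEnd ℂ) a with hD_def
    have hDne : ∀ z ∈ ball (0:ℂ) 1, D z ≠ 0 := by
      intro z hz hD0
      have : (D z).re < 0 := by
        simp only [hD_def, Complex.add_re, Complex.conj_re]
        linarith [hre z hz]
      rw [hD0] at this
      simp at this
    set h : ℂ → ℂ := fun z => (G z - a) / D z with hh_def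
    have hGdiff : DifferentiableOn ℂ G (ball 0 1) := fun z hz =>
      ((hGd z hz).differentiableAt).differentiableWithinAt
    have hhdiff : DifferentiableOn ℂ h (ball 0 1) :=
      (hGdiff.sub_const a).div (hGdiff.add_const _) hDne
    have hmaps : MapsTo h (ball (0:ℂ) 1) (ball (0:ℂ) 1) := by
      intro z hz
      rw [mem_ball_zero_iff]
      have hnum : ‖G z - a‖ < ‖D z‖ := by
        have h1 : Complex.normSq (G z - a) < Complex.normSq (D z) := by
          simp only [Complex.normSq_apply, hD_def, Complex.add_re, Complex.add_im,
            Complex.sub_re, Complex.sub_im, Complex.conj_re, Complex.conj_im]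
          nlinarith [hre z hz, hare]
        have := Real.sqrt_lt_sqrt (Complex.normSq_nonneg _) h1
        simpa [Complex.norm_def] using this
      rw [norm_div]
      exact (div_lt_one (lt_of_le_of_lt (norm_nonneg _) hnum)).2 hnum
    have hh0 : h 0 = 0 := by simp [hh_def, ha_def]
    -- Schwarz lemma
    have hschwarz : ‖deriv h 0‖ ≤ 1 := by
      have := Complex.norm_deriv_le_div_of_mapsTo_ball hhdiff
        (by rw [hh0]; exact hmaps.mono_right ball_subset_closedBall) one_pos
      simpa using this
    -- compute deriv h 0
    set q0 : ℂ := deriv F 0 / F 0 with hq0_def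
    have hDa : D 0 = (2 * a.re : ℝ) := by
      simp only [hD_def, ha_def]
      exact Complex.add_conj _
    have hhder : HasDerivAt h (q0 * D 0 / (D 0)^2) 0 := by
      have hN : HasDerivAt (fun z => G z - a) q0 0 := (hGd 0 h01).sub_const a
      have hD : HasDerivAt D q0 0 := (hGd 0 h01).add_const _
      have := hN.div hD (hDne 0 h01)
      have e : G 0 - a = 0 := by simp [ha_def]
      rw [e, zero_mul, sub_zero] at this
      exact this
    have hderiv_h : deriv h 0 = q0 / D 0 := by
      rw [hhder.deriv]
      have : D 0 ≠ 0 := hDne 0 h01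
      field_simp
    -- hence ‖q0‖ ≤ 2 * (-a.re)
    have hq0bound : ‖q0‖ ≤ 2 * (-a.re) := by
      rw [hderiv_h, norm_div] at hschwarz
      have hD0norm : ‖D 0‖ = 2 * (-a.re) := by
        rw [hDa]
        simp only [Complex.norm_real, Real.norm_eq_abs]
        rw [abs_of_neg (by linarith)]
        ring
      rw [hD0norm] at hschwarz
      have hpos : (0:ℝ) < 2 * (-a.re) := by linarith
      calc ‖q0‖ = ‖q0‖ / (2 * (-a.re)) * (2 * (-a.re)) := (div_mul_cancel₀ _ hpos.ne').symm
        _ ≤ 1 * (2 * (-a.re)) := by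
            exact mul_le_mul_of_nonneg_right hschwarz hpos.le
        _ = 2 * (-a.re) := one_mul _
    -- final computation
    have hF0 : F 0 ≠ 0 := hne 0 h0R
    have hderivF : ‖deriv F 0‖ = ‖F 0‖ * ‖q0‖ := by
      have hFq : F 0 * q0 = deriv F 0 := by
        rw [hq0_def]
        field_simp
      rw [← hFq, norm_mul]
    set t : ℝ := ‖F 0‖ with ht_def
    have ht0 : 0 < t := norm_pos_iff.2 hF0
    have ht1 : t < 1 := hlt 0 h0R
    have hare_log : a.re = Real.log t := by
      rw [ha_def] at hare ⊢
      have : Complex.exp (G 0) = F 0 := hGexp 0 h01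
      have hnorm : ‖F 0‖ = Real.exp (G 0).re := by
        rw [← this, Complex.norm_exp]
      rw [ht_def, hnorm, Real.log_exp]
    rw [hderivF]
    calc t * ‖q0‖ ≤ t * (2 * (-a.re)) := mul_le_mul_of_nonneg_left hq0bound ht0.le
      _ ≤ 2 / Real.exp 1 := by
          rw [hare_log]
          have hlog : -Real.log t ≤ t⁻¹ / Real.exp 1 := by
            have hx : (0:ℝ) < t⁻¹ / Real.exp 1 := by positivity
            have := Real.log_le_sub_one_of_pos hx
            rw [Real.log_div (by positivity) (Real.exp_ne_zero 1), Real.log_inv,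
              Real.log_exp] at this
            linarith
          have h2 : t * -Real.log t ≤ 1 / Real.exp 1 := by
            calc t * -Real.log t ≤ t * (t⁻¹ / Real.exp 1) :=
                  mul_le_mul_of_nonneg_left hlog ht0.le
              _ = (t * t⁻¹) / Real.exp 1 := by ring
              _ = 1 / Real.exp 1 := by rw [mul_inv_cancel₀ ht0.ne']
          calc t * (2 * -Real.log t) = 2 * (t * -Real.log t) := by ring
            _ ≤ 2 * (1 / Real.exp 1) := by linarith
            _ = 2 / Real.exp 1 := by ring

theorem stmt_5 (f : ℂ → ℂ)
    (hf : AnalyticOn ℂ f (Metric.ball 0 1))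
    (hf0 : ∀ z ∈ Metric.ball (0 : ℂ) 1, 0 < ‖f z‖ ∧ ‖f z‖ ≤ 1) :
    ‖deriv f 0‖ ≤ 2 / Real.exp 1 := by
  have hfd : DifferentiableOn ℂ f (ball 0 1) := hf.differentiableOn
  have hkey : ∀ r ∈ Set.Ioo (0:ℝ) 1, r * ‖deriv f 0‖ ≤ 2 / Real.exp 1 := by
    intro r hr
    obtain ⟨hr0, hr1⟩ := hr
    set F : ℂ → ℂ := fun z => f ((r:ℂ) * z) with hF_def
    have hmapsTo : ∀ z ∈ ball (0:ℂ) (1/r), (r:ℂ) * z ∈ ball (0:ℂ) 1 := by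
      intro z hz
      rw [mem_ball_zero_iff] at hz ⊢
      rw [norm_mul, Complex.norm_real, Real.norm_eq_abs, abs_of_pos hr0]
      calc r * ‖z‖ < r * (1/r) := by exact mul_lt_mul_of_pos_left hz hr0
        _ = 1 := by field_simp
    have hR : 1 < 1/r := by rw [lt_div_iff₀ hr0]; linarith
    have hFd : DifferentiableOn ℂ F (ball 0 (1/r)) := by
      intro z hz
      have h1 : DifferentiableAt ℂ f ((r:ℂ) * z) :=
        hfd.differentiableAt (isOpen_ball.mem_nhds (hmapsTo z hz))
      exact (h1.comp z ((differentiable_id.const_mul _) z)).differentiableWithinAt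
    have hFne : ∀ z ∈ ball (0:ℂ) (1/r), F z ≠ 0 := fun z hz =>
      norm_pos_iff.1 (hf0 _ (hmapsTo z hz)).1
    have hFle : ∀ z ∈ ball (0:ℂ) (1/r), ‖F z‖ ≤ 1 := fun z hz =>
      (hf0 _ (hmapsTo z hz)).2
    have hbound := key_aux hR hFd hFne hFle
    have hderF : deriv F 0 = (r:ℂ) * deriv f 0 := by
      have h1 : DifferentiableAt ℂ f ((r:ℂ) * 0) := by
        rw [mul_zero]
        exact hfd.differentiableAt (isOpen_ball.mem_nhds (by simp))
      have h2 : HasDerivAt (fun z : ℂ => (r:ℂ) * z) (r:ℂ) 0 := by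
        simpa using (hasDerivAt_id (0:ℂ)).const_mul (r:ℂ)
      have h3 := HasDerivAt.comp 0 (h1.hasDerivAt) h2
      rw [mul_zero] at h3
      have h4 : HasDerivAt F (deriv f 0 * (r:ℂ)) 0 := h3
      rw [h4.deriv]
      ring
    rw [hderF] at hbound
    rwa [norm_mul, Complex.norm_real, Real.norm_eq_abs, abs_of_pos hr0] at hbound
  have htend : Filter.Tendsto (fun r : ℝ => r * ‖deriv f 0‖)
      (nhdsWithin 1 (Set.Iio 1)) (nhds (‖deriv f 0‖)) := by
    have : Filter.Tendsto (fun r : ℝ => r * ‖deriv f 0‖) (nhds 1) (nhds (1 * ‖deriv f 0‖)) :=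
      (continuous_id.mul continuous_const).tendsto 1
    rw [one_mul] at this
    exact this.mono_left nhdsWithin_le_nhds
  refine le_of_tendsto htend ?_
  filter_upwards [Ioo_mem_nhdsLT_of_mem (by constructor <;> norm_num : (1:ℝ) ∈ Set.Ioc 0 1)]
    with r hr using hkey r hr
end

section
/- Let u be analytic on the unit disk with Re u(z) < 0 for all z, u(0) = -1, and Taylor expansion u(z) = -1 + b_1 z + b_2 z² + ···. Then |b_2 + b_1²/2| ≤ 2. -/
open Metric FormalMultilinearSeries Real
open scoped NNReal

theorem stmt_7 (u : ℂ → ℂ) (b : ℕ → ℂ)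
    (hu : AnalyticOn ℂ u (Metric.ball 0 1))
    (hre : ∀ z ∈ Metric.ball (0 : ℂ) 1, (u z).re < 0)
    (h0 : u 0 = -1)
    (hb : ∀ z ∈ Metric.ball (0 : ℂ) 1, HasSum (fun j => b j * z ^ j) (u z)) :
    ‖b 2 + b 1 ^ 2 / 2‖ ≤ 2 := by
  have hball : Metric.eball (0:ℂ) 1 = Metric.ball (0:ℂ) 1 := by
    simpa using Metric.emetric_ball_nnreal (x := (0:ℂ)) (ε := 1)
  have hcc : ∀ n, (ofScalars ℂ b n fun _ => (1:ℂ)) = b n := by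
    intro n
    rw [FormalMultilinearSeries.ofScalars_apply_eq]; simp
  have hc : ∀ n, (ofScalars ℂ b).coeff n = b n := hcc
  -- power series for u
  have hP : HasFPowerSeriesOnBall u (ofScalars ℂ b) 0 1 := by
    constructor
    · apply ENNReal.le_of_forall_nnreal_lt
      intro r hr
      have hr1 : (r : ℝ) < 1 := by exact_mod_cast hr
      have hz : (r : ℂ) ∈ Metric.ball (0 : ℂ) 1 := by
        simp [Complex.norm_of_nonneg r.coe_nonneg, hr1]
      have hs := (hb _ hz).summable
      have ht : Filter.Tendsto (fun n => ‖b n * (r : ℂ) ^ n‖) Filter.atTop (nhds 0) := by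
        simpa using hs.tendsto_atTop_zero.norm
      obtain ⟨C, hC⟩ := ht.bddAbove_range
      apply le_radius_of_bound _ C
      intro n
      rw [ofScalars_norm ℂ b n]
      calc ‖b n‖ * (r:ℝ) ^ n = ‖b n * (r : ℂ) ^ n‖ := by
            simp [Complex.norm_of_nonneg r.coe_nonneg, abs_of_nonneg r.coe_nonneg]
        _ ≤ C := hC ⟨n, rfl⟩
    · exact one_pos
    · intro y hy
      have hy' : y ∈ Metric.ball (0 : ℂ) 1 := by
        exact hball ▸ hy
      simpa [FormalMultilinearSeries.apply_eq_prod_smul_coeff, hc, mul_comm] using hb y hy'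
  have hA : AnalyticOnNhd ℂ u (Metric.ball 0 1) := hball ▸ hP.analyticOnNhd
  -- first and second derivatives of u at 0
  have hu1 : HasDerivAt u (b 1) 0 := by
    have := hP.hasFPowerSeriesAt.hasDerivAt
    rwa [hcc 1] at this
  have hu1' : deriv u 0 = b 1 := hu1.deriv
  have hu2 : deriv (deriv u) 0 = 2 * b 2 := by
    have h := hP.factorial_smul (1:ℂ) 2
    rw [hcc 2, ← iteratedDeriv_eq_iteratedFDeriv, iteratedDeriv_succ, iteratedDeriv_one] at h
    rw [← h]
    simp only [Nat.factorial, smul_eq_mul, nsmul_eq_mul]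
    push_cast
    ring
  have hu2' : HasDerivAt (deriv u) (2 * b 2) 0 := by
    have hd : AnalyticAt ℂ (deriv u) 0 := hA.deriv 0 (by simp)
    have := hd.differentiableAt.hasDerivAt
    rwa [hu2] at this
  -- the auxiliary function ω
  set ω : ℂ → ℂ := fun z => (1 + u z) / (1 - u z) with hωdef
  have hne : ∀ z ∈ Metric.ball (0:ℂ) 1, 1 - u z ≠ 0 := by
    intro z hz h
    have h1 := hre z hz
    have h2 : (1 - u z).re = 1 - (u z).re := by simp
    rw [h] at h2
    simp at h2
    linarith
  have hωd : ∀ z ∈ Metric.ball (0:ℂ) 1,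
      HasDerivAt ω (2 * deriv u z / (1 - u z)^2) z := by
    intro z hz
    have hu' : HasDerivAt u (deriv u z) z := ((hA z hz).differentiableAt).hasDerivAt
    have h1 : HasDerivAt (fun w => 1 + u w) (deriv u z) z := hu'.const_add 1
    have h2 : HasDerivAt (fun w => 1 - u w) (-(deriv u z)) z := hu'.const_sub 1
    have := h1.div h2 (hne z hz)
    convert (show HasDerivAt (fun w => (1 + u w) / (1 - u w)) _ z from this) using 1
    have hz2 := hne z hz
    ring
  have hball_mem : Metric.ball (0:ℂ) 1 ∈ nhds (0:ℂ) := isOpen_ball.mem_nhds (by simp)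
  have hEq : deriv ω =ᶠ[nhds (0:ℂ)] fun z => 2 * deriv u z / (1 - u z)^2 :=
    Filter.eventuallyEq_of_mem hball_mem (fun z hz => (hωd z hz).deriv)
  -- value of the second derivative of ω at 0
  have hval : iteratedDeriv 2 ω 0 = b 2 + b 1 ^ 2 / 2 := by
    have hnum : HasDerivAt (fun z => 2 * deriv u z) (2 * (2 * b 2)) 0 := hu2'.const_mul 2
    have hden : HasDerivAt (fun z => (1 - u z)^2)
        ((2:ℕ) * (1 - u 0) ^ 1 * (-(b 1))) 0 := by
      exact (hu1.const_sub 1).pow 2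
    have hden0 : (1 - u 0)^2 ≠ 0 := by rw [h0]; norm_num
    have hg := hnum.div hden hden0
    have hgval : (2 * (2 * b 2) * (1 - u 0)^2 - 2 * deriv u 0 * ((2:ℕ) * (1 - u 0) ^ 1 * (-(b 1))))
        / ((1 - u 0)^2)^2 = b 2 + b 1 ^ 2 / 2 := by
      rw [h0, hu1']
      norm_num
      ring
    rw [iteratedDeriv_succ, iteratedDeriv_one, hEq.deriv_eq, (show HasDerivAt (fun z => 2 * deriv u z / (1 - u z)^2) _ 0 from hg).deriv, hgval]
  -- the bound ‖ω z‖ ≤ 1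
  have hnorm : ∀ z ∈ Metric.ball (0:ℂ) 1, ‖ω z‖ ≤ 1 := by
    intro z hz
    have h1 := hre z hz
    have hle : ‖1 + u z‖ ≤ ‖1 - u z‖ := by
      rw [Complex.norm_def, Complex.norm_def]
      apply Real.sqrt_le_sqrt
      simp only [Complex.normSq_apply, Complex.add_re, Complex.add_im, Complex.sub_re,
        Complex.sub_im, Complex.one_re, Complex.one_im]
      nlinarith
    have hpos : 0 < ‖1 - u z‖ := norm_pos_iff.mpr (hne z hz)
    rw [hωdef]
    simp only [norm_div]
    exact div_le_one_of_le₀ hle hpos.le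
  -- Cauchy estimate
  have hbound : ∀ r : ℝ≥0, 0 < r → (r:ℝ) < 1 → ‖iteratedDeriv 2 ω 0‖ * (r:ℝ)^2 ≤ 2 := by
    intro r hr0 hr1
    have hsub : closedBall (0:ℂ) r ⊆ Metric.ball (0:ℂ) 1 :=
      closedBall_subset_ball hr1
    have hωdiff : DifferentiableOn ℂ ω (closedBall (0:ℂ) r) :=
      fun z hz => ((hωd z (hsub hz)).differentiableAt).differentiableWithinAt
    have hQ : HasFPowerSeriesOnBall ω (cauchyPowerSeries ω 0 r) 0 r :=
      hωdiff.hasFPowerSeriesOnBall hr0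
    -- integral bound
    have hcont : Continuous fun θ : ℝ => ‖ω (circleMap 0 r θ)‖ := by
      apply Continuous.norm
      rw [continuous_iff_continuousAt]
      intro θ
      have hm : circleMap 0 r θ ∈ Metric.ball (0:ℂ) 1 := by
        simp [circleMap, Complex.norm_of_nonneg r.coe_nonneg]
        simpa [abs_of_nonneg r.coe_nonneg] using hr1
      exact ((hωd _ hm).differentiableAt.continuousAt).comp (continuous_circleMap 0 r).continuousAt
    have hint : (∫ θ : ℝ in (0:ℝ)..2 * π, ‖ω (circleMap 0 r θ)‖) ≤ 2 * π := by
      have : (∫ θ : ℝ in (0:ℝ)..2 * π, ‖ω (circleMap 0 r θ)‖) ≤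
          ∫ θ : ℝ in (0:ℝ)..2 * π, (1:ℝ) := by
        apply intervalIntegral.integral_mono_on two_pi_pos.le
          (hcont.intervalIntegrable _ _) (intervalIntegrable_const)
        intro θ _
        apply hnorm
        simp [circleMap, Complex.norm_of_nonneg r.coe_nonneg]
        simpa [abs_of_nonneg r.coe_nonneg] using hr1
      simpa using this
    have h1 := norm_cauchyPowerSeries_le ω 0 r 2
    have h2 : ‖cauchyPowerSeries ω 0 (r:ℝ) 2‖ ≤ ((r:ℝ)⁻¹)^2 := by
      calc ‖cauchyPowerSeries ω 0 (r:ℝ) 2‖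
          ≤ ((2 * π)⁻¹ * ∫ θ : ℝ in (0:ℝ)..2 * π, ‖ω (circleMap 0 r θ)‖) * |(r:ℝ)|⁻¹ ^ 2 := h1
        _ ≤ ((2 * π)⁻¹ * (2 * π)) * |(r:ℝ)|⁻¹ ^ 2 := by
            apply mul_le_mul_of_nonneg_right
            · exact mul_le_mul_of_nonneg_left hint (by positivity)
            · positivity
        _ = ((r:ℝ)⁻¹)^2 := by
            rw [inv_mul_cancel₀ two_pi_pos.ne', one_mul, abs_of_nonneg r.coe_nonneg]
    have h3 := hQ.factorial_smul (1:ℂ) 2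
    rw [← iteratedDeriv_eq_iteratedFDeriv] at h3
    have h4 : ‖iteratedDeriv 2 ω 0‖ ≤ 2 * ((r:ℝ)⁻¹)^2 := by
      rw [← h3]
      have h5 : ‖(cauchyPowerSeries ω 0 (r:ℝ) 2) fun _ => (1:ℂ)‖ ≤
          ‖cauchyPowerSeries ω 0 (r:ℝ) 2‖ := by
        have := (cauchyPowerSeries ω 0 (r:ℝ) 2).le_opNorm fun _ => (1:ℂ)
        simpa using this
      calc ‖(Nat.factorial 2) • (cauchyPowerSeries ω 0 (r:ℝ) 2) fun _ => (1:ℂ)‖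
          = 2 * ‖(cauchyPowerSeries ω 0 (r:ℝ) 2) fun _ => (1:ℂ)‖ := by
            simp [Nat.factorial, norm_smul]
        _ ≤ 2 * ((r:ℝ)⁻¹)^2 := by
            apply mul_le_mul_of_nonneg_left (h5.trans h2) (by norm_num)
    calc ‖iteratedDeriv 2 ω 0‖ * (r:ℝ)^2 ≤ (2 * ((r:ℝ)⁻¹)^2) * (r:ℝ)^2 :=
          mul_le_mul_of_nonneg_right h4 (by positivity)
      _ = 2 := by
          field_simp
  -- pass to the limit r → 1⁻
  have hlim : ‖iteratedDeriv 2 ω 0‖ ≤ 2 := by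
    have htend : Filter.Tendsto (fun r : ℝ => ‖iteratedDeriv 2 ω 0‖ * r^2)
        (nhdsWithin 1 (Set.Iio 1)) (nhds (‖iteratedDeriv 2 ω 0‖)) := by
      have hcont : Filter.Tendsto (fun r : ℝ => ‖iteratedDeriv 2 ω 0‖ * r^2)
          (nhds 1) (nhds (‖iteratedDeriv 2 ω 0‖ * 1^2)) :=
        ((continuous_const.mul (continuous_pow 2)).tendsto 1)
      simpa using hcont.mono_left nhdsWithin_le_nhds
    refine le_of_tendsto htend ?_
    filter_upwards [Ioo_mem_nhdsLT_of_mem (by norm_num : (1:ℝ) ∈ Set.Ioc 0 1)] with r hr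
    have hr0 : (0:ℝ) < r := hr.1
    exact hbound ⟨r, hr0.le⟩ (by exact_mod_cast hr0) hr.2
  rw [← hval]
  exact hlim
end

section
/- Let u be analytic on the unit disk with Re u(z) < 0, u(0) = -1, and Taylor coefficients b_j. Then for every k ∈ ℕ with k ≥ 1, |b_{2k} + b_k²/2| ≤ 2. -/
open Complex MeasureTheory intervalIntegral Real Set

lemma exp_int_integral (m : ℤ) :
    (∫ θ in (0:ℝ)..(2*π), Complex.exp ((m:ℂ) * θ * Complex.I)) =
      if m = 0 then (2*π : ℂ) else 0 := by
  rcases eq_or_ne m 0 with h | h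
  · simp [h]
  · have hc : (m:ℂ) * Complex.I ≠ 0 := by
      simp [Complex.I_ne_zero, Int.cast_eq_zero, h]
    have this := integral_exp_mul_complex (a := 0) (b := 2*π) hc
    have key : ∀ θ:ℝ, (m:ℂ) * θ * Complex.I = ((m:ℂ) * Complex.I) * (θ:ℝ) := by
      intro θ; ring
    simp_rw [key]
    rw [this]
    have h1 : ((m:ℂ) * Complex.I) * ((2*π : ℝ):ℂ) = (m:ℤ) * (2 * (π:ℂ) * Complex.I) := by
      push_cast; ring
    rw [h1, Complex.exp_int_mul_two_pi_mul_I]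
    simp [h]

lemma summable_norm_b (u : ℂ → ℂ) (b : ℕ → ℂ)
    (hb : ∀ z ∈ Metric.ball (0 : ℂ) 1, HasSum (fun j => b j * z ^ j) (u z))
    {r : ℝ} (hr0 : 0 ≤ r) (hr1 : r < 1) :
    Summable (fun j => ‖b j‖ * r ^ j) := by
  obtain ⟨ρ, hρ0, hrρ, hρ1⟩ : ∃ ρ : ℝ, 0 < ρ ∧ r < ρ ∧ ρ < 1 :=
    ⟨(1 + r) / 2, by linarith, by linarith, by linarith⟩
  have hmem : (ρ : ℂ) ∈ Metric.ball (0 : ℂ) 1 := by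
    simp [abs_of_pos hρ0, hρ1]
  have hsum := (hb _ hmem).summable
  have htend : Filter.Tendsto (fun j => ‖b j * (ρ:ℂ) ^ j‖) Filter.atTop (nhds 0) := by
    simpa using hsum.tendsto_atTop_zero.norm
  obtain ⟨C, hC⟩ := htend.bddAbove_range
  have hC' : ∀ j, ‖b j‖ * ρ ^ j ≤ C := by
    intro j
    have := hC (Set.mem_range_self j)
    simpa [norm_mul, norm_pow, Complex.norm_real, abs_of_pos hρ0] using this
  have hg : Summable (fun j : ℕ => C * (r / ρ) ^ j) :=
    (summable_geometric_of_lt_one (by positivity)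
      (by rw [div_lt_one hρ0]; exact hrρ)).mul_left C
  refine Summable.of_nonneg_of_le (fun j => by positivity) (fun j => ?_) hg
  have h1 : ‖b j‖ * r ^ j = (‖b j‖ * ρ ^ j) * (r / ρ) ^ j := by
    have : ρ ^ j ≠ 0 := by positivity
    rw [div_pow]
    field_simp
  rw [h1]
  exact mul_le_mul_of_nonneg_right (hC' j) (by positivity)

lemma coeff_integral (u : ℂ → ℂ) (b : ℕ → ℂ)
    (hb : ∀ z ∈ Metric.ball (0 : ℂ) 1, HasSum (fun j => b j * z ^ j) (u z))
    {r : ℝ} (hr0 : 0 ≤ r) (hr1 : r < 1) (n : ℤ) :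
    (∫ θ in (0:ℝ)..(2*π),
        u ((r:ℂ) * Complex.exp ((θ:ℂ) * Complex.I)) * Complex.exp ((n:ℂ) * θ * Complex.I))
      = ∑' j : ℕ, b j * (r:ℂ) ^ j * (if (j:ℤ) + n = 0 then (2*π:ℂ) else 0) := by
  have hπ : (0:ℝ) ≤ 2*π := by positivity
  set μ := volume.restrict (Set.Ioc (0:ℝ) (2*π)) with hμ
  set F : ℕ → ℝ → ℂ := fun j θ =>
    b j * (r:ℂ) ^ j * Complex.exp (((j:ℤ) + n : ℤ) * (θ:ℂ) * Complex.I) with hF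
  have hmem : ∀ θ : ℝ, (r:ℂ) * Complex.exp ((θ:ℂ) * Complex.I) ∈ Metric.ball (0:ℂ) 1 := by
    intro θ
    simp only [Metric.mem_ball, dist_zero_right, norm_mul, Complex.norm_real,
      Real.norm_eq_abs, _root_.abs_of_nonneg hr0]
    rw [show ‖Complex.exp ((θ:ℂ) * Complex.I)‖ = 1 from by
      rw [Complex.norm_exp]; simp]
    simpa using hr1
  have hpt : ∀ θ : ℝ, HasSum (fun j => F j θ)
      (u ((r:ℂ) * Complex.exp ((θ:ℂ) * Complex.I)) * Complex.exp ((n:ℂ) * θ * Complex.I)) := by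
    intro θ
    have := (hb _ (hmem θ)).mul_right (Complex.exp ((n:ℂ) * θ * Complex.I))
    have hfun : (fun j => F j θ) = fun j => b j * ((r:ℂ) * Complex.exp ((θ:ℂ) * Complex.I)) ^ j
        * Complex.exp ((n:ℂ) * θ * Complex.I) := by
      funext j
      simp only [hF]
      rw [mul_pow, ← Complex.exp_nat_mul]
      have he : Complex.exp ((((j:ℤ) + n : ℤ):ℂ) * (θ:ℂ) * Complex.I)
          = Complex.exp ((j:ℕ) * ((θ:ℂ) * Complex.I)) * Complex.exp ((n:ℂ) * θ * Complex.I) := by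
        rw [← Complex.exp_add]; congr 1; push_cast; ring
      rw [he]; ring
    rw [hfun]; exact this
  have hcont : ∀ j : ℕ, Continuous (F j) := by
    intro j
    apply Continuous.mul continuous_const
    exact Complex.continuous_exp.comp (by fun_prop)
  have hint : ∀ j : ℕ, Integrable (F j) μ := fun j =>
    ((hcont j).integrableOn_Ioc (a := 0) (b := 2*π))
  have hnormval : ∀ j : ℕ, ∀ θ : ℝ, ‖F j θ‖ = ‖b j‖ * r ^ j := by
    intro j θ
    simp only [hF]
    rw [norm_mul, norm_mul, show ‖Complex.exp ((((j:ℤ) + n : ℤ):ℂ) * (θ:ℂ) * Complex.I)‖ = 1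
        from by
      rw [Complex.norm_exp,
        show ((((j:ℤ) + n : ℤ):ℂ) * (θ:ℂ) * Complex.I).re = 0 from by simp]
      exact Real.exp_zero]
    rw [norm_pow, Complex.norm_real, Real.norm_eq_abs, _root_.abs_of_nonneg hr0, mul_one]
  have hintnorm : ∀ j : ℕ, (∫ θ, ‖F j θ‖ ∂μ) = ‖b j‖ * r ^ j * (2*π) := by
    intro j
    simp only [hnormval j]
    rw [MeasureTheory.integral_const]
    simp [hμ, Real.volume_Ioc, ENNReal.toReal_ofReal hπ, mul_comm, Real.pi_pos.le]
  have hsummable : Summable (fun j => ∫ θ, ‖F j θ‖ ∂μ) := by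
    simp only [hintnorm]
    exact (summable_norm_b u b hb hr0 hr1).mul_right (2*π)
  have key := MeasureTheory.hasSum_integral_of_summable_integral_norm hint hsummable
  have hleft : (∫ θ, (∑' j, F j θ) ∂μ)
      = ∫ θ in (0:ℝ)..(2*π),
        u ((r:ℂ) * Complex.exp ((θ:ℂ) * Complex.I)) * Complex.exp ((n:ℂ) * θ * Complex.I) := by
    rw [intervalIntegral.integral_of_le hπ]
    exact MeasureTheory.integral_congr_ae (Filter.Eventually.of_forall fun θ => (hpt θ).tsum_eq)
  have hterm : ∀ j : ℕ, (∫ θ, F j θ ∂μ)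
      = b j * (r:ℂ) ^ j * (if (j:ℤ) + n = 0 then (2*π:ℂ) else 0) := by
    intro j
    simp only [hF]
    rw [MeasureTheory.integral_const_mul, ← intervalIntegral.integral_of_le hπ,
      exp_int_integral]
  rw [← hleft]
  rw [show (fun j => ∫ θ, F j θ ∂μ) = _ from funext hterm] at key
  exact key.tsum_eq.symm

lemma bound_at_r (u : ℂ → ℂ) (b : ℕ → ℂ)
    (hu : AnalyticOn ℂ u (Metric.ball 0 1))
    (hre : ∀ z ∈ Metric.ball (0 : ℂ) 1, (u z).re < 0)
    (h0 : u 0 = -1)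
    (hb : ∀ z ∈ Metric.ball (0 : ℂ) 1, HasSum (fun j => b j * z ^ j) (u z))
    (k : ℕ) (hk : 1 ≤ k) {r : ℝ} (hr0 : 0 ≤ r) (hr1 : r < 1) :
    ‖b (2*k) * (r:ℂ)^(2*k) + (b k * (r:ℂ)^k)^2/2‖ ≤ 2 := by
  have hπ : (0:ℝ) ≤ 2*π := by positivity
  set z : ℝ → ℂ := fun θ => (r:ℂ) * Complex.exp ((θ:ℂ) * Complex.I) with hz
  have hmem : ∀ θ : ℝ, z θ ∈ Metric.ball (0:ℂ) 1 := by
    intro θ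
    simp only [hz, Metric.mem_ball, dist_zero_right, norm_mul, Complex.norm_real,
      Real.norm_eq_abs, _root_.abs_of_nonneg hr0]
    rw [show ‖Complex.exp ((θ:ℂ) * Complex.I)‖ = 1 from by
      rw [Complex.norm_exp]; simp]
    simpa using hr1
  -- b 0 = -1
  have hb0 : b 0 = -1 := by
    have h := hb 0 (by simp)
    have h2 : HasSum (fun j : ℕ => b j * (0:ℂ) ^ j) (b 0) := by
      convert hasSum_single (f := fun j : ℕ => b j * (0:ℂ) ^ j) 0 ?_ using 2
      · simp
      · intro j hj; simp [pow_eq_zero_iff, hj]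
    rw [← h.unique h2]; exact h0
  set E : ℤ → ℝ → ℂ := fun n θ => Complex.exp ((n:ℂ) * θ * Complex.I) with hE
  -- coefficient integrals
  have hcoeff : ∀ m : ℕ, (∫ θ in (0:ℝ)..(2*π), u (z θ) * E (-(m:ℤ)) θ)
      = 2*π * (b m * (r:ℂ)^m) := by
    intro m
    have h1 := coeff_integral u b hb hr0 hr1 (-(m:ℤ))
    simp only [Int.cast_neg, Int.cast_natCast] at h1
    simp only [hE, hz, Int.cast_neg, Int.cast_natCast]
    rw [h1, tsum_eq_single m ?_]
    · simp [mul_comm]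
    · intro j hj
      rw [if_neg, mul_zero]
      omega
  have hzero : ∀ m : ℕ, 1 ≤ m → (∫ θ in (0:ℝ)..(2*π), u (z θ) * E (m:ℤ) θ) = 0 := by
    intro m hm
    have h1 := coeff_integral u b hb hr0 hr1 (m:ℤ)
    simp only [Int.cast_natCast] at h1
    simp only [hE, hz, Int.cast_natCast]
    rw [h1]
    have : ∀ j : ℕ, b j * (r:ℂ)^j * (if (j:ℤ) + (m:ℤ) = 0 then (2*π:ℂ) else 0) = 0 := by
      intro j
      rw [if_neg, mul_zero]
      omega
    simp only [this, tsum_zero]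
  -- continuity
  have hzc : Continuous z := by
    simp only [hz]
    exact continuous_const.mul (Complex.continuous_exp.comp
      (Complex.continuous_ofReal.mul continuous_const))
  have hcu : Continuous (fun θ => u (z θ)) :=
    hu.continuousOn.comp_continuous hzc hmem
  have hcE : ∀ n : ℤ, Continuous (E n) := by
    intro n
    simp only [hE]
    exact Complex.continuous_exp.comp
      ((continuous_const.mul Complex.continuous_ofReal).mul continuous_const)
  set W : ℝ → ℂ := fun θ => -(u (z θ) + (starRingEnd ℂ) (u (z θ)))/2 with hW
  have hcW : Continuous W := by
    simp only [hW]
    exact ((hcu.add (Complex.continuous_conj.comp hcu)).neg).div_const 2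
  have hconjint : ∀ f : ℝ → ℂ,
      (∫ θ in (0:ℝ)..(2*π), (starRingEnd ℂ) (f θ)) = (starRingEnd ℂ) (∫ θ in (0:ℝ)..(2*π), f θ) := by
    intro f
    rw [intervalIntegral.integral_of_le hπ, intervalIntegral.integral_of_le hπ,
      integral_conj]
  have hconjE : ∀ n : ℤ, ∀ θ : ℝ, (starRingEnd ℂ) (E n θ) = E (-n) θ := by
    intro n θ
    simp only [hE]
    rw [← Complex.exp_conj]
    congr 1
    simp only [map_mul, Complex.conj_I, Complex.conj_ofReal, map_intCast]
    push_cast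
    ring
  -- conj u integrals
  have hIcu_neg : ∀ m : ℕ, 1 ≤ m →
      (∫ θ in (0:ℝ)..(2*π), (starRingEnd ℂ) (u (z θ)) * E (-(m:ℤ)) θ) = 0 := by
    intro m hm
    have heq : ∀ θ : ℝ, (starRingEnd ℂ) (u (z θ)) * E (-(m:ℤ)) θ
        = (starRingEnd ℂ) (u (z θ) * E (m:ℤ) θ) := by
      intro θ
      rw [map_mul, hconjE]
    simp only [heq]
    rw [hconjint, hzero m hm, map_zero]
  have hIcu_pos : ∀ m : ℕ,
      (∫ θ in (0:ℝ)..(2*π), (starRingEnd ℂ) (u (z θ)) * E (m:ℤ) θ)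
        = 2*π * (starRingEnd ℂ) (b m * (r:ℂ)^m) := by
    intro m
    have heq : ∀ θ : ℝ, (starRingEnd ℂ) (u (z θ)) * E (m:ℤ) θ
        = (starRingEnd ℂ) (u (z θ) * E (-(m:ℤ)) θ) := by
      intro θ
      rw [map_mul, hconjE, neg_neg]
    simp only [heq]
    rw [hconjint, hcoeff m, map_mul]
    congr 1
    simp [map_ofNat, Complex.conj_ofReal]
  -- W integrals
  have hintWE : ∀ n : ℤ, IntervalIntegrable (fun θ => W θ * E n θ) volume 0 (2*π) :=
    fun n => (hcW.mul (hcE n)).intervalIntegrable _ _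
  have hintuE : ∀ n : ℤ, IntervalIntegrable (fun θ => u (z θ) * E n θ) volume 0 (2*π) :=
    fun n => (hcu.mul (hcE n)).intervalIntegrable _ _
  have hintcuE : ∀ n : ℤ, IntervalIntegrable (fun θ => (starRingEnd ℂ) (u (z θ)) * E n θ) volume 0 (2*π) :=
    fun n => ((Complex.continuous_conj.comp hcu).mul (hcE n)).intervalIntegrable _ _
  have hsplit : ∀ n : ℤ, (∫ θ in (0:ℝ)..(2*π), W θ * E n θ)
      = -(1/2) * ((∫ θ in (0:ℝ)..(2*π), u (z θ) * E n θ)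
          + (∫ θ in (0:ℝ)..(2*π), (starRingEnd ℂ) (u (z θ)) * E n θ)) := by
    intro n
    rw [← intervalIntegral.integral_add (hintuE n) (hintcuE n),
      ← intervalIntegral.integral_const_mul]
    apply intervalIntegral.integral_congr
    intro θ _
    simp only [hW]
    ring
  have hIW_neg : ∀ m : ℕ, 1 ≤ m →
      (∫ θ in (0:ℝ)..(2*π), W θ * E (-(m:ℤ)) θ) = -π * (b m * (r:ℂ)^m) := by
    intro m hm
    rw [hsplit, hcoeff m, hIcu_neg m hm]
    push_cast
    ring
  have hIW_pos : ∀ m : ℕ, 1 ≤ m →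
      (∫ θ in (0:ℝ)..(2*π), W θ * E (m:ℤ) θ) = -π * (starRingEnd ℂ) (b m * (r:ℂ)^m) := by
    intro m hm
    rw [hsplit, hzero m hm, hIcu_pos m]
    push_cast
    ring
  have hIW_0 : (∫ θ in (0:ℝ)..(2*π), W θ) = 2*π := by
    have h1 : (∫ θ in (0:ℝ)..(2*π), W θ) = ∫ θ in (0:ℝ)..(2*π), W θ * E (0:ℤ) θ := by
      apply intervalIntegral.integral_congr
      intro θ _
      simp [hE]
    rw [h1, hsplit]
    have h2 := hcoeff 0
    simp only [Nat.cast_zero, neg_zero, pow_zero, mul_one, hb0] at h2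
    have h3 := hIcu_pos 0
    simp only [Nat.cast_zero, pow_zero, mul_one, hb0, map_neg, map_one] at h3
    rw [h2, h3]
    push_cast
    ring
  -- the quadratic expressions
  set B1 : ℂ := b k * (r:ℂ)^k with hB1
  set B2 : ℂ := b (2*k) * (r:ℂ)^(2*k) with hB2
  set γ : ℂ := -B1/2 with hγ
  set g : ℝ → ℂ := fun θ => E (-(k:ℤ)) θ - γ with hg
  have hcg : Continuous g := (hcE _).sub continuous_const
  have hEsq : ∀ θ : ℝ, E (-(k:ℤ)) θ * E (-(k:ℤ)) θ = E (-((2*k:ℕ):ℤ)) θ := by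
    intro θ
    simp only [hE, ← Complex.exp_add]
    congr 1
    push_cast
    ring
  have hEmul : ∀ θ : ℝ, E (-(k:ℤ)) θ * E ((k:ℕ):ℤ) θ = 1 := by
    intro θ
    simp only [hE, ← Complex.exp_add]
    rw [show ((((-(k:ℤ)):ℤ):ℂ) * θ * Complex.I + (((k:ℕ):ℤ):ℂ) * θ * Complex.I) = 0 from by
      push_cast; ring]
    exact Complex.exp_zero
  -- J
  have hJeq : (∫ θ in (0:ℝ)..(2*π), W θ * (g θ)^2) = -π * (B2 + B1^2/2) := by
    have hpt : ∀ θ : ℝ, W θ * (g θ)^2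
        = W θ * E (-((2*k:ℕ):ℤ)) θ + ((-2*γ) * (W θ * E (-(k:ℤ)) θ) + γ^2 * W θ) := by
      intro θ
      have e2 : E (-(k:ℤ)) θ ^ 2 = E (-((2*k:ℕ):ℤ)) θ := by rw [sq, hEsq θ]
      have h1 : (g θ)^2 = E (-((2*k:ℕ):ℤ)) θ - 2*γ*E (-(k:ℤ)) θ + γ^2 := by
        simp only [hg]
        rw [sub_sq, e2]
        ring
      rw [h1]
      ring
    rw [intervalIntegral.integral_congr (fun θ _ => hpt θ)]
    rw [intervalIntegral.integral_add (f := fun θ => W θ * E (-((2*k:ℕ):ℤ)) θ)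
      (g := fun θ => (-2*γ) * (W θ * E (-(k:ℤ)) θ) + γ^2 * W θ) (hintWE _)
      (((continuous_const.mul (hcW.mul (hcE _))).add (continuous_const.mul hcW)).intervalIntegrable _ _)]
    rw [intervalIntegral.integral_add (f := fun θ => (-2*γ) * (W θ * E (-(k:ℤ)) θ))
      (g := fun θ => γ^2 * W θ)
      ((continuous_const.mul (hcW.mul (hcE _))).intervalIntegrable _ _)
      ((continuous_const.mul hcW).intervalIntegrable _ _)]
    rw [intervalIntegral.integral_const_mul, intervalIntegral.integral_const_mul]
    rw [hIW_neg (2*k) (by omega), hIW_neg k hk, hIW_0]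
    rw [show b (2*k) * (r:ℂ)^(2*k) = B2 from rfl, show b k * (r:ℂ)^k = B1 from rfl, hγ]
    push_cast
    ring
  -- K
  have hKeq : (∫ θ in (0:ℝ)..(2*π), W θ * (g θ * (starRingEnd ℂ) (g θ)))
      = 2*π - π * (B1 * (starRingEnd ℂ) B1)/2 := by
    have hpt : ∀ θ : ℝ, W θ * (g θ * (starRingEnd ℂ) (g θ))
        = W θ + (((-(starRingEnd ℂ) γ) * (W θ * E (-(k:ℤ)) θ)
          + (-γ) * (W θ * E ((k:ℕ):ℤ) θ)) + (γ * (starRingEnd ℂ) γ) * W θ) := by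
      intro θ
      have hcg2 : (starRingEnd ℂ) (g θ) = E ((k:ℕ):ℤ) θ - (starRingEnd ℂ) γ := by
        simp only [hg, map_sub, hconjE, neg_neg]
      rw [hcg2]
      simp only [hg]
      linear_combination (W θ) * hEmul θ
    rw [intervalIntegral.integral_congr (fun θ _ => hpt θ)]
    have iA : IntervalIntegrable (fun θ => (-(starRingEnd ℂ) γ) * (W θ * E (-(k:ℤ)) θ)) volume 0 (2*π) :=
      (continuous_const.mul (hcW.mul (hcE _))).intervalIntegrable _ _
    have iB : IntervalIntegrable (fun θ => (-γ) * (W θ * E ((k:ℕ):ℤ) θ)) volume 0 (2*π) :=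
      (continuous_const.mul (hcW.mul (hcE _))).intervalIntegrable _ _
    have iC : IntervalIntegrable (fun θ => (γ * (starRingEnd ℂ) γ) * W θ) volume 0 (2*π) :=
      (continuous_const.mul hcW).intervalIntegrable _ _
    rw [intervalIntegral.integral_add (hcW.intervalIntegrable _ _) ((iA.add iB).add iC),
      intervalIntegral.integral_add (iA.add iB) iC,
      intervalIntegral.integral_add iA iB,
      intervalIntegral.integral_const_mul, intervalIntegral.integral_const_mul,
      intervalIntegral.integral_const_mul,
      hIW_neg k hk, hIW_pos k hk, hIW_0]
    rw [show b k * (r:ℂ)^k = B1 from rfl, hγ]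
    simp only [map_neg, map_div₀, map_ofNat]
    push_cast
    ring
  -- real-valuedness and norm bound
  have hWre : ∀ θ : ℝ, W θ = ((-(u (z θ)).re : ℝ) : ℂ) := by
    intro θ
    simp only [hW]
    rw [Complex.add_conj]
    push_cast
    ring
  have hptreal : ∀ θ : ℝ, W θ * (g θ * (starRingEnd ℂ) (g θ))
      = ((‖W θ * (g θ)^2‖ : ℝ) : ℂ) := by
    intro θ
    have hnn : (0:ℝ) ≤ -(u (z θ)).re := by
      have := hre _ (hmem θ)
      linarith
    rw [Complex.mul_conj, hWre θ, norm_mul, Complex.norm_real, Real.norm_eq_abs,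
      _root_.abs_of_nonneg hnn, norm_pow, Complex.sq_norm]
    push_cast
    ring
  have hKreal : (∫ θ in (0:ℝ)..(2*π), W θ * (g θ * (starRingEnd ℂ) (g θ)))
      = (((∫ θ in (0:ℝ)..(2*π), ‖W θ * (g θ)^2‖) : ℝ) : ℂ) := by
    rw [intervalIntegral.integral_congr (fun θ _ => hptreal θ)]
    exact RCLike.intervalIntegral_ofReal
  have hnormle : (∫ θ in (0:ℝ)..(2*π), ‖W θ * (g θ)^2‖) ≤ 2*π := by
    have h1 : (((∫ θ in (0:ℝ)..(2*π), ‖W θ * (g θ)^2‖) : ℝ) : ℂ)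
        = 2*π - π * (B1 * (starRingEnd ℂ) B1)/2 := by
      rw [← hKreal, hKeq]
    rw [Complex.mul_conj] at h1
    have h2 : (((∫ θ in (0:ℝ)..(2*π), ‖W θ * (g θ)^2‖) : ℝ) : ℂ)
        = (((2*π - π * Complex.normSq B1 / 2 : ℝ)) : ℂ) := by
      rw [h1]; push_cast; ring
    have h3 := Complex.ofReal_inj.mp h2
    rw [h3]
    nlinarith [Complex.normSq_nonneg B1, Real.pi_pos]
  have hJle : ‖∫ θ in (0:ℝ)..(2*π), W θ * (g θ)^2‖ ≤ 2*π :=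
    le_trans (intervalIntegral.norm_integral_le_integral_norm hπ) hnormle
  rw [hJeq] at hJle
  rw [norm_mul, norm_neg, Complex.norm_real, Real.norm_eq_abs,
    _root_.abs_of_nonneg Real.pi_pos.le] at hJle
  have hpi := Real.pi_pos
  calc ‖B2 + B1^2/2‖ = (π * ‖B2 + B1^2/2‖)/π := by
        field_simp
    _ ≤ (2*π)/π := (div_le_div_iff_of_pos_right hpi).mpr hJle
    _ = 2 := by field_simp

theorem stmt_8 (u : ℂ → ℂ) (b : ℕ → ℂ)
    (hu : AnalyticOn ℂ u (Metric.ball 0 1))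
    (hre : ∀ z ∈ Metric.ball (0 : ℂ) 1, (u z).re < 0)
    (h0 : u 0 = -1)
    (hb : ∀ z ∈ Metric.ball (0 : ℂ) 1, HasSum (fun j => b j * z ^ j) (u z)) :
    ∀ k : ℕ, 1 ≤ k → ‖b (2 * k) + b k ^ 2 / 2‖ ≤ 2 := by
  intro k hk
  have key : ∀ r : ℝ, 0 ≤ r → r < 1 →
      ‖b (2*k) * (r:ℂ)^(2*k) + (b k * (r:ℂ)^k)^2/2‖ ≤ 2 :=
    fun r h1 h2 => bound_at_r u b hu hre h0 hb k hk h1 h2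
  set F : ℝ → ℝ := fun r => ‖b (2*k) * (r:ℂ)^(2*k) + (b k * (r:ℂ)^k)^2/2‖ with hF
  have hFc : Continuous F := by
    apply Continuous.norm
    apply Continuous.add
    · exact continuous_const.mul (Complex.continuous_ofReal.pow _)
    · exact ((continuous_const.mul (Complex.continuous_ofReal.pow _)).pow 2).div_const 2
  have htends : Filter.Tendsto F (nhdsWithin 1 (Set.Iio 1)) (nhds (F 1)) :=
    (hFc.tendsto 1).mono_left nhdsWithin_le_nhds
  have hev : ∀ᶠ r in nhdsWithin (1:ℝ) (Set.Iio 1), F r ≤ 2 := by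
    filter_upwards [Ioo_mem_nhdsLT_of_mem (by norm_num : (1:ℝ) ∈ Set.Ioc 0 1)] with r hr
    exact key r hr.1.le hr.2
  have hle : F 1 ≤ 2 := le_of_tendsto htends hev
  have hF1 : F 1 = ‖b (2*k) + b k ^ 2 / 2‖ := by
    simp [hF]
  rwa [hF1] at hle
end

section
/- If two complex polynomials have equal real parts at every point of the unit circle, then they differ by a purely imaginary constant. In particular, if the real part of a complex polynomial vanishes identically on the unit circle, then the polynomial is a purely imaginary constant. -/
open Polynomial Complex

lemma circle_infinite' : Set.Infinite {z : ℂ | ‖z‖ = 1} := by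
  have hmaps : ∀ t ∈ Set.Ioo (0:ℝ) 1,
      ((t : ℂ) + Complex.I * Real.sqrt (1 - t ^ 2)) ∈ {z : ℂ | ‖z‖ = 1} := by
    intro t ht
    have ht1 : (0:ℝ) ≤ 1 - t ^ 2 := by nlinarith [ht.1, ht.2]
    have hsq : Real.sqrt (1 - t ^ 2) * Real.sqrt (1 - t ^ 2) = 1 - t ^ 2 :=
      Real.mul_self_sqrt ht1
    show ‖(t : ℂ) + Complex.I * Real.sqrt (1 - t ^ 2)‖ = 1
    rw [Complex.norm_def, Complex.normSq_apply]
    simp only [Complex.add_re, Complex.add_im, Complex.ofReal_re, Complex.ofReal_im,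
      Complex.mul_re, Complex.mul_im, Complex.I_re, Complex.I_im]
    ring_nf
    rw [show t ^ 2 + Real.sqrt (1 - t ^ 2) ^ 2 = 1 by nlinarith [hsq]]
    exact Real.sqrt_one
  have hinj : Set.InjOn (fun t : ℝ => (t : ℂ) + Complex.I * Real.sqrt (1 - t ^ 2))
      (Set.Ioo (0:ℝ) 1) := by
    intro a _ b _ hab
    have := congrArg Complex.re hab
    simpa using this
  have himg := (Set.Ioo_infinite (show (0:ℝ) < 1 by norm_num)).image hinj
  refine himg.mono ?_
  rintro z ⟨t, ht, rfl⟩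
  exact hmaps t ht

theorem stmt_11 (P Q : Polynomial ℂ)
    (h : ∀ z : ℂ, ‖z‖ = 1 → (P.eval z).re = (Q.eval z).re) :
    (∃ c : ℝ, P - Q = Polynomial.C (Complex.I * c)) ∧
    (Q = 0 → ∃ c : ℝ, P = Polynomial.C (Complex.I * c)) := by
  set R := P - Q with hR
  have hre : ∀ z : ℂ, ‖z‖ = 1 → (R.eval z).re = 0 := by
    intro z hz
    simp [hR, Polynomial.eval_sub, Complex.sub_re, h z hz]
  set B := R.map (starRingEnd ℂ) with hB
  set n := R.natDegree with hn
  have hBdeg : B.natDegree ≤ n := natDegree_map_le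
  set S := Polynomial.X ^ n * R + reflect n B with hSdef
  -- S vanishes on the unit circle
  have hSroot : ∀ z : ℂ, ‖z‖ = 1 → S.eval z = 0 := by
    intro z hz
    have hz0 : z ≠ 0 := by
      intro h0; rw [h0] at hz; simp at hz
    letI : Invertible (z⁻¹ : ℂ) := invertibleOfNonzero (inv_ne_zero hz0)
    have key := Polynomial.eval₂_reflect_mul_pow (RingHom.id ℂ) (z⁻¹) n B hBdeg
    rw [invOf_eq_inv, inv_inv] at key
    have key' : (reflect n B).eval z * (z⁻¹) ^ n = B.eval z⁻¹ := key
    have hrefl : (reflect n B).eval z = z ^ n * B.eval z⁻¹ := by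
      have h1 : (z⁻¹) ^ n * z ^ n = 1 := by
        rw [← mul_pow, inv_mul_cancel₀ hz0, one_pow]
      calc (reflect n B).eval z = (reflect n B).eval z * ((z⁻¹) ^ n * z ^ n) := by
            rw [h1, mul_one]
        _ = ((reflect n B).eval z * (z⁻¹) ^ n) * z ^ n := by ring
        _ = B.eval z⁻¹ * z ^ n := by rw [key']
        _ = z ^ n * B.eval z⁻¹ := mul_comm _ _
    have hconj : z⁻¹ = (starRingEnd ℂ) z := Complex.inv_eq_conj hz
    have hBeval : B.eval z⁻¹ = (starRingEnd ℂ) (R.eval z) := by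
      rw [hconj, hB, Polynomial.eval_map, Polynomial.eval₂_at_apply]
    have hsum : R.eval z + (starRingEnd ℂ) (R.eval z) = 0 := by
      rw [Complex.add_conj, hre z hz]
      simp
    simp only [hSdef, Polynomial.eval_add, Polynomial.eval_mul, Polynomial.eval_pow,
      Polynomial.eval_X, hrefl, hBeval]
    rw [← mul_add, hsum, mul_zero]
  have hS0 : S = 0 := by
    apply Polynomial.eq_zero_of_infinite_isRoot
    exact circle_infinite'.mono (fun z hz => hSroot z hz)
  -- extract coefficients
  have hcoeffk : ∀ k : ℕ, 1 ≤ k → R.coeff k = 0 := by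
    intro k hk
    have h1 : S.coeff (k + n) = 0 := by rw [hS0]; simp
    have e1 : (Polynomial.X ^ n * R).coeff (k + n) = R.coeff k :=
      Polynomial.coeff_X_pow_mul R n k
    have e2 : (reflect n B).coeff (k + n) = 0 := by
      rw [Polynomial.coeff_reflect, Polynomial.revAt_eq_self_of_lt (by omega)]
      exact Polynomial.coeff_eq_zero_of_natDegree_lt (by omega)
    rw [hSdef, Polynomial.coeff_add, e1, e2, add_zero] at h1
    exact h1
  have hcoeff0 : (R.coeff 0).re = 0 := by
    have h1 : S.coeff (0 + n) = 0 := by rw [hS0]; simp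
    have e1 : (Polynomial.X ^ n * R).coeff (0 + n) = R.coeff 0 :=
      Polynomial.coeff_X_pow_mul R n 0
    have e2 : (reflect n B).coeff (0 + n) = (starRingEnd ℂ) (R.coeff 0) := by
      rw [Polynomial.coeff_reflect, Nat.zero_add, Polynomial.revAt_le (le_refl n),
        Nat.sub_self, hB, Polynomial.coeff_map]
    rw [hSdef, Polynomial.coeff_add, e1, e2] at h1
    have := congrArg Complex.re h1
    simp [Complex.add_re, Complex.conj_re] at this
    linarith
  have hRC : R = Polynomial.C (R.coeff 0) := by
    apply Polynomial.eq_C_of_natDegree_le_zero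
    exact Polynomial.natDegree_le_iff_coeff_eq_zero.mpr (fun m hm => hcoeffk m hm)
  have hmain : ∃ c : ℝ, P - Q = Polynomial.C (Complex.I * c) := by
    refine ⟨(R.coeff 0).im, ?_⟩
    rw [← hR, hRC]
    congr 1
    apply Complex.ext <;> simp [hcoeff0]
  exact ⟨hmain, fun hQ => by
    obtain ⟨c, hc⟩ := hmain
    exact ⟨c, by rwa [hQ, sub_zero] at hc⟩⟩
end

section
/- Let a > 1 and b ≥ a be natural numbers and let G_{a,b} be the additive semigroup of positive integers generated by the interval {k ∈ ℕ : a ≤ k ≤ b}. Then G_{a,b} = ⋃_{ℓ=1}^∞ {k ∈ ℕ : ℓa ≤ k ≤ ℓb}. -/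
theorem stmt_19 (a b : ℕ) (ha : 1 < a) (hab : a ≤ b) :
    (AddSubsemigroup.closure (Set.Icc a b) : Set ℕ) =
      ⋃ l ∈ Set.Ici (1 : ℕ), Set.Icc (l * a) (l * b) := by
  have key : ∀ l, 1 ≤ l → ∀ k, l * a ≤ k → k ≤ l * b →
      k ∈ (AddSubsemigroup.closure (Set.Icc a b) : Set ℕ) := by
    intro l hl
    induction l, hl using Nat.le_induction with
    | base =>
      intro k h1 h2
      exact AddSubsemigroup.subset_closure ⟨by simpa using h1, by simpa using h2⟩
    | succ l hl ih =>
      intro k h1 h2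
      rw [show (l+1)*a = l*a+a by ring] at h1
      rw [show (l+1)*b = l*b+b by ring] at h2
      by_cases hc : k ≤ l * a + b
      · have hca : a ≤ k - l * a := by omega
        have hcb : k - l * a ≤ b := by omega
        have h3 : k = (k - l * a) + l * a := by
          have : l * a ≤ k := by nlinarith
          omega
        rw [h3]
        exact AddSubsemigroup.add_mem _
          (AddSubsemigroup.subset_closure ⟨hca, hcb⟩)
          (ih (l * a) le_rfl (Nat.mul_le_mul_left l hab))
      · have hb : b ≤ k := by nlinarith
        have h3 : k = b + (k - b) := by omega
        rw [h3]
        exact AddSubsemigroup.add_mem _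
          (AddSubsemigroup.subset_closure ⟨hab, le_rfl⟩)
          (ih (k - b) (by omega) (by omega))
  ext k
  simp only [Set.mem_iUnion, Set.mem_Ici, Set.mem_Icc, exists_prop]
  constructor
  · intro hk
    induction hk using AddSubsemigroup.closure_induction with
    | mem x hx => exact ⟨1, le_rfl, by simpa using hx.1, by simpa using hx.2⟩
    | add x y hx hy ihx ihy =>
      obtain ⟨l, hl, hl1, hl2⟩ := ihx
      obtain ⟨m, hm, hm1, hm2⟩ := ihy
      exact ⟨l + m, by omega, by nlinarith, by nlinarith⟩
  · rintro ⟨l, hl, h1, h2⟩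
    exact key l hl k h1 h2
end
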